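/- arXiv:1001.5120 — 4 statements merged into one kernel-verified Lean document; each statement's English description precedes it below -/
import Mathlib

section
/- For every integer m ≥ 3, the improper integral ∫₀^∞ (√(1+t^m) − t^{m/2}) dt converges and equals B(1/2, 1 + 1/m) / (2 cos(π/m)), where B is the Euler beta function. -/
/-!
Substituting `t = 1/x` turns the integrand into `x ^ (p/2 - 2) / (√(1 + x^p) + 1)`. The
derivative of `x ^ (p/2 - 1) / (√(1 + x^p) + 1)` is a combination of this function and
`x ^ (p/2 - 2) / √(1 + x^p)`, so the two integrals are proportional; the second one becomes the beta
integral `B(1/2 - 1/p, 1/p)` under `y = x^p` and `u = y/(1+y)`. The reflection formula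
`Γ(1/2 - r) Γ(1/2 + r) = π / cos(π r)` converts this into the stated form.
-/

open Real MeasureTheory Set

noncomputable def realBeta (x y : ℝ) : ℝ := Real.Gamma x * Real.Gamma y / Real.Gamma (x + y)

open Filter Topology

lemma integrableOn_Ioi_of_abs_le_rpow {f : ℝ → ℝ}
    (hf : AEStronglyMeasurable f (volume.restrict (Ioi 0))) {r s : ℝ} (hr : -1 < r) (hs : s < -1)
    (h_small : ∀ x ∈ Ioc (0 : ℝ) 1, |f x| ≤ x ^ r) (h_large : ∀ x ∈ Ioi (1 : ℝ), |f x| ≤ x ^ s) :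
    IntegrableOn f (Ioi 0) := by
  rw [← Ioc_union_Ioi_eq_Ioi zero_le_one]
  refine IntegrableOn.union ?_ ?_
  · have hg : IntegrableOn (fun x : ℝ ↦ x ^ r) (Ioc 0 1) := by
      rw [← intervalIntegrable_iff_integrableOn_Ioc_of_le zero_le_one]
      exact intervalIntegral.intervalIntegrable_rpow' hr
    refine hg.integrable.mono' (hf.mono_measure (Measure.restrict_mono Ioc_subset_Ioi_self le_rfl))
      ((ae_restrict_iff' measurableSet_Ioc).2 (ae_of_all _ fun x hx ↦ ?_))
    simpa only [Real.norm_eq_abs] using h_small x hx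
  · refine (integrableOn_Ioi_rpow_of_lt hs one_pos).integrable.mono'
      (hf.mono_measure (Measure.restrict_mono (Ioi_subset_Ioi zero_le_one) le_rfl))
      ((ae_restrict_iff' measurableSet_Ioi).2 (ae_of_all _ fun x hx ↦ ?_))
    simpa only [Real.norm_eq_abs] using h_large x hx

lemma integral_Ioo_rpow_mul_one_sub_rpow {a b : ℝ} (ha : 0 < a) (hb : 0 < b) :
    ∫ u in Ioo (0 : ℝ) 1, u ^ (a - 1) * (1 - u) ^ (b - 1) = realBeta a b := by
  have hC := Complex.Gamma_mul_Gamma_eq_betaIntegral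
    (s := (a : ℂ)) (t := (b : ℂ)) (by simpa using ha) (by simpa using hb)
  have hbeta : Complex.betaIntegral a b =
      ((∫ u in Ioo (0 : ℝ) 1, u ^ (a - 1) * (1 - u) ^ (b - 1) : ℝ) : ℂ) := by
    rw [Complex.betaIntegral, intervalIntegral.integral_of_le zero_le_one,
      integral_Ioc_eq_integral_Ioo, ← integral_complex_ofReal]
    refine setIntegral_congr_fun measurableSet_Ioo fun u hu ↦ ?_
    rw [Complex.ofReal_mul, Complex.ofReal_cpow hu.1.le, Complex.ofReal_cpow (sub_pos.2 hu.2).le]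
    push_cast
    ring
  rw [hbeta, ← Complex.ofReal_add, Complex.Gamma_ofReal, Complex.Gamma_ofReal,
    Complex.Gamma_ofReal, ← Complex.ofReal_mul, ← Complex.ofReal_mul] at hC
  rw [realBeta, Complex.ofReal_injective hC,
    mul_div_cancel_left₀ _ (Real.Gamma_pos_of_pos (add_pos ha hb)).ne']

lemma integral_Ioi_rpow_mul_one_add_rpow {a b : ℝ} (ha : 0 < a) (hb : 0 < b) :
    ∫ y in Ioi (0 : ℝ), y ^ (a - 1) * (1 + y) ^ (-(a + b)) = realBeta a b := by
  have himg : (fun y : ℝ ↦ y / (1 + y)) '' Ioi 0 = Ioo 0 1 := by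
    ext u
    constructor
    · rintro ⟨y, hy : 0 < y, rfl⟩
      exact ⟨by positivity, (div_lt_one (by linarith)).2 (by linarith)⟩
    · rintro ⟨hu0, hu1⟩
      refine ⟨u / (1 - u), div_pos hu0 (sub_pos.2 hu1), ?_⟩
      field_simp [(sub_pos.2 hu1).ne']
      ring
  have hderiv : ∀ y ∈ Ioi (0 : ℝ),
      HasDerivWithinAt (fun y : ℝ ↦ y / (1 + y)) ((1 + y) ^ (-2 : ℝ)) (Ioi 0) y := by
    intro y (hy : 0 < y)
    refine (((hasDerivAt_id y).div ((hasDerivAt_id y).const_add 1)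
      (by simp only [id]; linarith)).hasDerivWithinAt).congr_deriv ?_
    rw [Real.rpow_neg (by linarith), Real.rpow_two]
    simp only [id]
    field_simp
    ring
  have hinj : InjOn (fun y : ℝ ↦ y / (1 + y)) (Ioi 0) := by
    intro y (hy : 0 < y) z (hz : 0 < z) h
    field_simp at h
    linarith
  rw [← integral_Ioo_rpow_mul_one_sub_rpow ha hb, ← himg,
    integral_image_eq_integral_abs_deriv_smul measurableSet_Ioi hderiv hinj]
  refine setIntegral_congr_fun measurableSet_Ioi fun y (hy : 0 < y) ↦ ?_
  have h1y : 0 < 1 + y := by linarith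
  have hsub : 1 - y / (1 + y) = (1 + y)⁻¹ := by field_simp; ring
  rw [smul_eq_mul, hsub, Real.div_rpow hy.le h1y.le, Real.inv_rpow h1y.le,
    abs_of_pos (by positivity), ← Real.rpow_neg h1y.le, div_eq_mul_inv, ← Real.rpow_neg h1y.le]
  calc y ^ (a - 1) * (1 + y) ^ (-(a + b))
      = y ^ (a - 1) * ((1 + y) ^ (-2 : ℝ) * (1 + y) ^ (-(a - 1)) * (1 + y) ^ (-(b - 1))) := by
        rw [← Real.rpow_add h1y, ← Real.rpow_add h1y]
        ring_nf
    _ = (1 + y) ^ (-2 : ℝ) * (y ^ (a - 1) * (1 + y) ^ (-(a - 1)) * (1 + y) ^ (-(b - 1))) := by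
        ring

lemma realBeta_half_sub_mul_div {r : ℝ} (hr : 0 < r) (hr' : r < 1 / 2) :
    realBeta (1 / 2 - r) r * r / (1 + 2 * r) = realBeta (1 / 2) (1 + r) / (2 * cos (π * r)) := by
  have hcos : 0 < cos (π * r) :=
    Real.cos_pos_of_mem_Ioo ⟨by nlinarith [pi_pos], by nlinarith [pi_pos]⟩
  have hreflect : Real.Gamma (1 / 2 - r) * Real.Gamma (1 / 2 + r) = π / cos (π * r) := by
    rw [show 1 / 2 + r = 1 - (1 / 2 - r) by ring, Real.Gamma_mul_Gamma_one_sub,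
      show π * (1 / 2 - r) = π / 2 - π * r by ring, Real.sin_pi_div_two_sub]
  have hΓr : Real.Gamma (1 + r) = r * Real.Gamma r := by
    rw [add_comm, Real.Gamma_add_one hr.ne']
  have hΓhalf : Real.Gamma (1 / 2 + (1 + r)) = (1 / 2 + r) * Real.Gamma (1 / 2 + r) := by
    rw [show 1 / 2 + (1 + r) = (1 / 2 + r) + 1 by ring, Real.Gamma_add_one (by positivity)]
  have hπ : Real.Gamma (1 / 2) ^ 2 = π := by
    rw [Real.Gamma_one_half_eq, Real.sq_sqrt pi_pos.le]
  rw [realBeta, realBeta, hΓr, hΓhalf, sub_add_cancel]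
  field_simp
  rw [hπ, mul_comm r π, ← hreflect]
  ring_nf

section
variable {p t : ℝ}

lemma sqrt_rpow (ht : 0 ≤ t) : √(t ^ p) = t ^ (p / 2) := by
  rw [Real.sqrt_eq_rpow, ← Real.rpow_mul ht]
  ring_nf

lemma one_le_sqrt_one_add_rpow (ht : 0 ≤ t) : 1 ≤ √(1 + t ^ p) :=
  Real.one_le_sqrt.2 (le_add_of_nonneg_right (Real.rpow_nonneg ht p))

lemma rpow_half_le_sqrt_one_add_rpow (ht : 0 ≤ t) : t ^ (p / 2) ≤ √(1 + t ^ p) := by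
  rw [← sqrt_rpow ht]
  exact Real.sqrt_le_sqrt (by linarith)

lemma sqrt_one_add_rpow_sub_rpow_half (ht : 0 ≤ t) :
    √(1 + t ^ p) - t ^ (p / 2) = (√(1 + t ^ p) + t ^ (p / 2))⁻¹ := by
  refine eq_inv_of_mul_eq_one_left ?_
  rw [← sqrt_rpow ht]
  linear_combination Real.sq_sqrt (by positivity : 0 ≤ 1 + t ^ p)
    - Real.sq_sqrt (Real.rpow_nonneg ht p)

lemma integrableOn_sqrt_one_add_rpow_sub_rpow_half (hp : 2 < p) :
    IntegrableOn (fun t : ℝ ↦ √(1 + t ^ p) - t ^ (p / 2)) (Ioi 0) := by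
  refine integrableOn_Ioi_of_abs_le_rpow (Measurable.aestronglyMeasurable (by fun_prop))
    (r := 0) (s := -(p / 2)) (by norm_num) (by linarith) (fun x hx ↦ ?_) (fun x hx ↦ ?_)
  · have hx0 : 0 ≤ x := hx.1.le
    have hD := one_le_sqrt_one_add_rpow (p := p) hx0
    have hs := Real.rpow_nonneg hx0 (p / 2)
    rw [sqrt_one_add_rpow_sub_rpow_half hx0, Real.rpow_zero, abs_of_pos (by positivity)]
    exact inv_le_one_of_one_le₀ (by linarith)
  · have hx0 : 0 < x := zero_lt_one.trans hx
    have hs := Real.rpow_pos_of_pos hx0 (p / 2)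
    rw [sqrt_one_add_rpow_sub_rpow_half hx0.le, Real.rpow_neg hx0.le, abs_of_pos (by positivity)]
    exact inv_anti₀ hs (le_add_of_nonneg_left (Real.sqrt_nonneg _))

lemma integrableOn_rpow_div_sqrt_one_add_rpow_add (hp : 2 < p) {e : ℝ} (he : 0 ≤ e) :
    IntegrableOn (fun x : ℝ ↦ x ^ (p / 2 - 2) / (√(1 + x ^ p) + e)) (Ioi 0) := by
  refine integrableOn_Ioi_of_abs_le_rpow (Measurable.aestronglyMeasurable (by fun_prop))
    (r := p / 2 - 2) (s := -2) (by linarith) (by norm_num) (fun x hx ↦ ?_) (fun x hx ↦ ?_)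
  · have hx0 : 0 ≤ x := hx.1.le
    have hD := one_le_sqrt_one_add_rpow (p := p) hx0
    rw [abs_of_nonneg (by positivity)]
    exact div_le_self (Real.rpow_nonneg hx0 _) (by linarith)
  · have hx0 : 0 < x := zero_lt_one.trans hx
    have hD := rpow_half_le_sqrt_one_add_rpow (p := p) hx0.le
    rw [abs_of_nonneg (by positivity)]
    calc x ^ (p / 2 - 2) / (√(1 + x ^ p) + e)
        ≤ x ^ (p / 2 - 2) / x ^ (p / 2) :=
          div_le_div_of_nonneg_left (by positivity) (by positivity) (by linarith)
      _ = x ^ (-2 : ℝ) := by rw [← Real.rpow_sub hx0]; ring_nf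

lemma integral_sqrt_one_add_rpow_sub_rpow_half_eq_integral_inv :
    ∫ t in Ioi (0 : ℝ), (√(1 + t ^ p) - t ^ (p / 2)) =
      ∫ x in Ioi (0 : ℝ), x ^ (p / 2 - 2) / (√(1 + x ^ p) + 1) := by
  rw [← integral_comp_rpow_Ioi _ (p := -1) (by norm_num)]
  refine setIntegral_congr_fun measurableSet_Ioi fun x (hx : 0 < x) ↦ ?_
  have hsqrt : √(1 + (x ^ p)⁻¹) = √(1 + x ^ p) / x ^ (p / 2) := by
    rw [← sqrt_rpow hx.le, ← Real.sqrt_div (by positivity)]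
    congr 1
    field_simp
    ring
  rw [smul_eq_mul, Real.rpow_neg_one, sqrt_one_add_rpow_sub_rpow_half (inv_nonneg.2 hx.le),
    Real.inv_rpow hx.le, Real.inv_rpow hx.le, hsqrt, show (-1 : ℝ) - 1 = -2 by norm_num,
    Real.rpow_neg hx.le, Real.rpow_sub hx, Real.rpow_two]
  field_simp
  norm_num

lemma hasDerivAt_rpow_div_sqrt_one_add_rpow_add_one {x : ℝ} (hx : 0 < x) :
    HasDerivAt (fun x : ℝ ↦ x ^ (p / 2 - 1) / (√(1 + x ^ p) + 1))
      (p / 2 * (x ^ (p / 2 - 2) / √(1 + x ^ p))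
        - (p / 2 + 1) * (x ^ (p / 2 - 2) / (√(1 + x ^ p) + 1))) x := by
  have hD1 := one_le_sqrt_one_add_rpow (p := p) hx.le
  have hnum := Real.hasDerivAt_rpow_const (p := p / 2 - 1) (Or.inl hx.ne')
  have hden := (((Real.hasDerivAt_rpow_const (p := p) (Or.inl hx.ne')).const_add 1).sqrt
    (by positivity)).add_const 1
  refine (hnum.div hden (by positivity)).congr_deriv ?_
  have hsq : x ^ p = (x ^ (p / 2)) ^ 2 := by
    rw [← Real.rpow_natCast, ← Real.rpow_mul hx.le]
    norm_num
  have hD2 := Real.sq_sqrt (by positivity : 0 ≤ 1 + x ^ p)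
  rw [show p / 2 - 1 - 1 = p / 2 - 2 by ring, Real.rpow_sub hx, Real.rpow_sub_one hx.ne',
    Real.rpow_sub_one hx.ne', Real.rpow_two]
  set D := √(1 + x ^ p)
  rw [hsq] at hD2 ⊢
  field_simp
  linear_combination p * hD2

lemma tendsto_rpow_div_sqrt_one_add_rpow_add_one_atTop :
    Tendsto (fun x : ℝ ↦ x ^ (p / 2 - 1) / (√(1 + x ^ p) + 1)) atTop (𝓝 0) := by
  refine tendsto_of_tendsto_of_tendsto_of_le_of_le' tendsto_const_nhds tendsto_inv_atTop_zero
    ?_ ?_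
  all_goals filter_upwards [eventually_gt_atTop 0] with x hx
  · positivity
  · have hD := rpow_half_le_sqrt_one_add_rpow (p := p) hx.le
    rw [div_le_iff₀ (by positivity), Real.rpow_sub_one hx.ne', inv_mul_eq_div]
    exact div_le_div_of_nonneg_right (by linarith) hx.le

lemma integral_rpow_div_sqrt_one_add_rpow_add_one (hp : 2 < p) :
    ∫ x in Ioi (0 : ℝ), x ^ (p / 2 - 2) / (√(1 + x ^ p) + 1) =
      p / (p + 2) * ∫ x in Ioi (0 : ℝ), x ^ (p / 2 - 2) / √(1 + x ^ p) := by
  have hint₁ := integrableOn_rpow_div_sqrt_one_add_rpow_add hp zero_le_one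
  have hint₀ := integrableOn_rpow_div_sqrt_one_add_rpow_add hp le_rfl
  simp only [add_zero] at hint₀
  have hcont : ContinuousWithinAt (fun x : ℝ ↦ x ^ (p / 2 - 1) / (√(1 + x ^ p) + 1)) (Ici 0) 0 :=
    ((Real.continuousAt_rpow_const _ _ (Or.inr (by linarith))).div
      (by fun_prop (disch := exact Or.inr (by linarith))) (by positivity)).continuousWithinAt
  have hFTC := integral_Ioi_of_hasDerivAt_of_tendsto hcont
    (fun x hx ↦ hasDerivAt_rpow_div_sqrt_one_add_rpow_add_one hx)
    ((hint₀.const_mul _).sub (hint₁.const_mul _)) tendsto_rpow_div_sqrt_one_add_rpow_add_one_atTop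
  rw [integral_sub (hint₀.const_mul _) (hint₁.const_mul _), integral_const_mul,
    integral_const_mul, Real.zero_rpow (by linarith), zero_div, sub_zero] at hFTC
  rw [div_mul_eq_mul_div, eq_div_iff (by linarith)]
  linarith

lemma integral_rpow_div_sqrt_one_add_rpow (hp : 2 < p) :
    ∫ x in Ioi (0 : ℝ), x ^ (p / 2 - 2) / √(1 + x ^ p) = realBeta (1 / 2 - 1 / p) (1 / p) / p := by
  have hp0 : 0 < p := by linarith
  have ha : 0 < 1 / 2 - 1 / p := sub_pos.2 (one_div_lt_one_div_of_lt two_pos hp)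
  rw [← integral_Ioi_rpow_mul_one_add_rpow ha (one_div_pos.2 hp0), sub_add_cancel,
    ← integral_comp_rpow_Ioi_of_pos hp0
      (g := fun y ↦ y ^ (1 / 2 - 1 / p - 1) * (1 + y) ^ (-(1 / 2 : ℝ))), ← integral_div]
  refine setIntegral_congr_fun measurableSet_Ioi fun x (hx : 0 < x) ↦ ?_
  rw [smul_eq_mul, ← Real.rpow_mul hx.le, Real.rpow_neg (by positivity),
    ← Real.sqrt_eq_rpow, show p / 2 - 2 = (p - 1) + p * (1 / 2 - 1 / p - 1) by field_simp; ring,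
    Real.rpow_add hx]
  field_simp

theorem integral_sqrt_one_add_rpow_sub_rpow_half (hp : 2 < p) :
    ∫ t in Ioi (0 : ℝ), (√(1 + t ^ p) - t ^ (p / 2)) =
      realBeta (1 / 2) (1 + 1 / p) / (2 * cos (π / p)) := by
  have hp0 : 0 < p := by linarith
  rw [integral_sqrt_one_add_rpow_sub_rpow_half_eq_integral_inv,
    integral_rpow_div_sqrt_one_add_rpow_add_one hp, integral_rpow_div_sqrt_one_add_rpow hp,
    ← mul_one_div π, ← realBeta_half_sub_mul_div (one_div_pos.2 hp0)
      (one_div_lt_one_div_of_lt two_pos hp)]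
  field_simp

end

theorem stmt_0 (m : ℕ) (hm : 3 ≤ m) :
    IntegrableOn (fun t : ℝ => Real.sqrt (1 + t ^ m) - t ^ ((m : ℝ) / 2)) (Ioi 0) ∧
    ∫ t in Ioi (0 : ℝ), (Real.sqrt (1 + t ^ m) - t ^ ((m : ℝ) / 2)) =
      realBeta (1 / 2) (1 + 1 / m) / (2 * Real.cos (π / m)) := by
  have hm : (2 : ℝ) < m := by exact_mod_cast hm
  simpa only [Real.rpow_natCast] using
    And.intro (integrableOn_sqrt_one_add_rpow_sub_rpow_half hm)
      (integral_sqrt_one_add_rpow_sub_rpow_half hm)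
end

section
/- Let m ≥ 3 be an integer and let j, k be integers with 1 ≤ k ≤ j < (m+2)/2 and j ≠ 1. Then ∫₀^∞ ( t^{mk−j}/(1+t^m)^{k−1/2} − t^{m/2 − j} ) dt = (1/m) · B(k − (j−1)/m, (j−1)/m − 1/2). -/
open Real MeasureTheory Set

/-! For `-1 < b < 0 < a + b` the beta integral `∫₀^∞ s^(a-1) (1+s)^(-(a+b)) ds` diverges at
infinity, but subtracting its leading term `s^(-b-1)` makes it converge. The primitive
`G s = (s^(-b) - s^a (1+s)^(-(a+b))) / b` vanishes at `0` and at `∞`, and `G'` is the regularized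
integrand minus `(a+b)/b` times the convergent beta integrand with `b + 1` in place of `b`; hence
the regularized integral is `(a+b)/b · B(a, b+1) = B(a, b)`. The substitution `s = t^m` produces
the factor `1/m`, with `a = k - (j-1)/m` and `b = (j-1)/m - 1/2`. -/

open Filter Topology

lemma realBeta_eq_intervalIntegral {a b : ℝ} (ha : 0 < a) (hb : 0 < b) :
    realBeta a b = ∫ u in (0 : ℝ)..1, u ^ (a - 1) * (1 - u) ^ (b - 1) := by
  rw [show realBeta a b = ProbabilityTheory.beta a b from rfl,
    ProbabilityTheory.beta_eq_betaIntegralReal a b ha hb, Complex.betaIntegral,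
    ← Complex.ofReal_re (∫ u in (0 : ℝ)..1, _), ← intervalIntegral.integral_ofReal]
  congr 1
  refine intervalIntegral.integral_congr fun u hu => ?_
  rw [uIcc_of_le zero_le_one] at hu
  push_cast
  rw [Complex.ofReal_cpow hu.1, Complex.ofReal_cpow (sub_nonneg.mpr hu.2)]
  push_cast
  rfl

lemma realBeta_add_one_right {a b : ℝ} (hb : b ≠ 0) (hab : a + b ≠ 0) :
    realBeta a (b + 1) = b / (a + b) * realBeta a b := by
  rw [realBeta, realBeta, ← add_assoc, Real.Gamma_add_one hb, Real.Gamma_add_one hab,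
    div_mul_div_comm, mul_left_comm]

lemma image_div_one_add_Ioi : (fun s : ℝ => s / (1 + s)) '' Ioi 0 = Ioo 0 1 := by
  ext u
  constructor
  · rintro ⟨s, hs, rfl⟩
    have hs : (0 : ℝ) < s := hs
    exact ⟨by positivity, (div_lt_one (by positivity)).mpr (by linarith)⟩
  · rintro ⟨hu0, hu1⟩
    refine ⟨u / (1 - u), div_pos hu0 (by linarith), ?_⟩
    have : 1 - u ≠ 0 := by linarith
    field_simp
    ring

lemma injOn_div_one_add_Ioi : InjOn (fun s : ℝ => s / (1 + s)) (Ioi 0) := by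
  intro s (hs : 0 < s) t (ht : 0 < t) h
  have : 1 + s ≠ 0 := by linarith
  have : 1 + t ≠ 0 := by linarith
  field_simp at h
  linarith

lemma integral_Ioi_rpow_mul_one_add_rpow_neg_eq_realBeta {a b : ℝ} (ha : 0 < a) (hb : 0 < b) :
    ∫ s in Ioi (0 : ℝ), s ^ (a - 1) * (1 + s) ^ (-(a + b)) = realBeta a b := by
  have hderiv : ∀ s ∈ Ioi (0 : ℝ),
      HasDerivWithinAt (fun s => s / (1 + s)) ((1 + s) ^ 2)⁻¹ (Ioi 0) s := by
    intro s (hs : 0 < s)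
    have h := (hasDerivAt_id' s).div ((hasDerivAt_id' s).const_add 1) (by positivity)
    rw [show (1 * (1 + s) - s * 1) / (1 + s) ^ 2 = ((1 + s) ^ 2)⁻¹ by ring] at h
    exact h.hasDerivWithinAt
  rw [realBeta_eq_intervalIntegral ha hb, intervalIntegral.integral_of_le zero_le_one,
    integral_Ioc_eq_integral_Ioo, ← image_div_one_add_Ioi,
    integral_image_eq_integral_abs_deriv_smul measurableSet_Ioi hderiv injOn_div_one_add_Ioi]
  refine setIntegral_congr_fun measurableSet_Ioi fun s (hs : 0 < s) => ?_
  have h1s : 0 < 1 + s := by linarith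
  have hsplit : (1 + s) ^ (-(a + b)) =
      ((1 + s) ^ (a - 1) * (1 + s) ^ (b - 1) * (1 + s) ^ (2 : ℝ))⁻¹ := by
    rw [← rpow_add h1s, ← rpow_add h1s, ← rpow_neg h1s.le]
    ring_nf
  rw [hsplit, one_sub_div h1s.ne', add_sub_cancel_right, div_rpow hs.le h1s.le,
    one_div, inv_rpow h1s.le, rpow_two, smul_eq_mul, abs_of_pos (by positivity)]
  field_simp

lemma rpow_neg_sub_one_add_rpow_neg_le {c s : ℝ} (hc : 0 ≤ c) (hs : 0 < s) :
    s ^ (-c) - (1 + s) ^ (-c) ≤ c * s ^ (-c - 1) := by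
  obtain ⟨ξ, ⟨hsξ, -⟩, hξ⟩ := exists_hasDerivAt_eq_slope (fun x : ℝ => x ^ (-c))
    (fun x => -c * x ^ (-c - 1)) (lt_one_add s)
    (fun x hx =>
      (continuousAt_rpow_const x (-c) (Or.inl (by linarith [hx.1]))).continuousWithinAt)
    (fun x hx => hasDerivAt_rpow_const (Or.inl (by linarith [hx.1])))
  rw [add_sub_cancel_right, div_one] at hξ
  have : ξ ^ (-c - 1) ≤ s ^ (-c - 1) := rpow_le_rpow_of_nonpos hs hsξ.le (by linarith)
  nlinarith

lemma abs_rpow_mul_rpow_neg_sub_one_add_rpow_neg_le {p c s : ℝ} (hc : 0 ≤ c) (hs : 0 < s) :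
    |s ^ p * (s ^ (-c) - (1 + s) ^ (-c))| ≤ c * s ^ (p - c - 1) := by
  have hanti : (1 + s) ^ (-c) ≤ s ^ (-c) :=
    rpow_le_rpow_of_nonpos hs (by linarith) (neg_nonpos.mpr hc)
  rw [abs_of_nonneg (mul_nonneg (rpow_nonneg hs.le p) (sub_nonneg.mpr hanti))]
  calc s ^ p * (s ^ (-c) - (1 + s) ^ (-c)) ≤ s ^ p * (c * s ^ (-c - 1)) :=
        mul_le_mul_of_nonneg_left (rpow_neg_sub_one_add_rpow_neg_le hc hs) (rpow_nonneg hs.le p)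
    _ = c * s ^ (p - c - 1) := by rw [mul_left_comm, ← rpow_add hs]; ring_nf

noncomputable def betaPrimitive (a b s : ℝ) : ℝ := (s ^ (-b) - s ^ a * (1 + s) ^ (-(a + b))) / b

section
variable {a b : ℝ}

lemma hasDerivAt_betaPrimitive (hb : b ≠ 0) {s : ℝ} (hs : 0 < s) :
    HasDerivAt (betaPrimitive a b)
      (s ^ (a - 1) * (1 + s) ^ (-(a + b)) - s ^ (-b - 1)
        - (a + b) / b * (s ^ (a - 1) * (1 + s) ^ (-(a + (b + 1))))) s := by
  have h1s : 0 < 1 + s := by linarith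
  have h := ((hasDerivAt_rpow_const (p := -b) (Or.inl hs.ne')).sub
    ((hasDerivAt_rpow_const (p := a) (Or.inl hs.ne')).mul
      (((hasDerivAt_id' s).const_add 1).rpow_const (p := -(a + b)) (Or.inl h1s.ne')))).div_const b
  refine h.congr_deriv ?_
  rw [rpow_sub_one hs.ne' a, show -(a + (b + 1)) = -(a + b) - 1 by ring,
    rpow_sub_one h1s.ne' (-(a + b))]
  field_simp
  ring

lemma integrableOn_Ioi_rpow_mul_one_add_rpow_neg_sub_rpow (hb : b < 0) (hb' : -1 < b)
    (hab : 0 < a + b) :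
    IntegrableOn (fun s : ℝ => s ^ (a - 1) * (1 + s) ^ (-(a + b)) - s ^ (-b - 1)) (Ioi 0) := by
  have hcont : ContinuousOn (fun s : ℝ => s ^ (a - 1) * (1 + s) ^ (-(a + b)) - s ^ (-b - 1))
      (Ioi 0) := by
    intro x (hx : 0 < x)
    have h1x : 1 + x ≠ 0 := by linarith
    exact (((continuousAt_rpow_const x _ (Or.inl hx.ne')).mul
      ((continuousAt_const.add (continuousAt_id' _)).rpow_const (Or.inl h1x))).sub
      (continuousAt_rpow_const x _ (Or.inl hx.ne'))).continuousWithinAt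
  rw [← Ioc_union_Ioi_eq_Ioi zero_le_one]
  refine IntegrableOn.union ?_ ?_
  · have hpow : ∀ {r : ℝ}, -1 < r → IntegrableOn (fun s : ℝ => s ^ r) (Ioc 0 1) :=
      fun hr => (intervalIntegrable_iff_integrableOn_Ioc_of_le zero_le_one).mp
        (intervalIntegral.intervalIntegrable_rpow' hr)
    refine IntegrableOn.sub ?_ (hpow (by linarith))
    exact (hpow (by linarith)).mul_continuousOn_of_subset
      (fun x hx => ((continuousAt_const.add (continuousAt_id' _)).rpow_const
        (Or.inl (by linarith [hx.1] : 1 + x ≠ 0))).continuousWithinAt)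
      measurableSet_Ioc isCompact_Icc Ioc_subset_Icc_self
  · refine Integrable.mono' ((integrableOn_Ioi_rpow_of_lt (by linarith : -b - 2 < -1)
      one_pos).const_mul (a + b))
      ((hcont.mono (Ioi_subset_Ioi zero_le_one)).aestronglyMeasurable measurableSet_Ioi) ?_
    refine (ae_restrict_iff' measurableSet_Ioi).mpr (Eventually.of_forall fun s hs => ?_)
    have hs : (0 : ℝ) < s := zero_lt_one.trans hs
    rw [show s ^ (a - 1) * (1 + s) ^ (-(a + b)) - s ^ (-b - 1) =
        -(s ^ (a - 1) * (s ^ (-(a + b)) - (1 + s) ^ (-(a + b)))) by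
      rw [mul_sub, ← rpow_add hs, show a - 1 + -(a + b) = -b - 1 by ring]; ring,
      norm_neg, Real.norm_eq_abs]
    have h := abs_rpow_mul_rpow_neg_sub_one_add_rpow_neg_le (p := a - 1) hab.le hs
    rwa [show a - 1 - (a + b) - 1 = -b - 2 by ring] at h

lemma tendsto_betaPrimitive_atTop (hb' : -1 < b) (hab : 0 < a + b) :
    Tendsto (betaPrimitive a b) atTop (𝓝 0) := by
  refine squeeze_zero_norm' (a := fun s => (a + b) * s ^ (-(b + 1)) / |b|) ?_ ?_
  · filter_upwards [eventually_gt_atTop 0] with s hs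
    have h := abs_rpow_mul_rpow_neg_sub_one_add_rpow_neg_le (p := a) hab.le hs
    rw [show a - (a + b) - 1 = -(b + 1) by ring] at h
    rw [betaPrimitive, Real.norm_eq_abs, abs_div, show s ^ (-b) - s ^ a * (1 + s) ^ (-(a + b)) =
      s ^ a * (s ^ (-(a + b)) - (1 + s) ^ (-(a + b))) by
      rw [mul_sub, ← rpow_add hs, show a + -(a + b) = -b by ring]]
    exact div_le_div_of_nonneg_right h (abs_nonneg b)
  · simpa using
      ((tendsto_rpow_neg_atTop (by linarith : 0 < b + 1)).const_mul (a + b)).div_const |b|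

lemma continuousWithinAt_betaPrimitive_zero (hb : b < 0) (hab : 0 < a + b) :
    ContinuousWithinAt (betaPrimitive a b) (Ici 0) 0 :=
  (((continuousAt_rpow_const 0 _ (Or.inr (by linarith))).sub
    ((continuousAt_rpow_const 0 _ (Or.inr (by linarith))).mul
      ((continuousAt_const.add (continuousAt_id' _)).rpow_const (Or.inl (by norm_num))))).div_const
    b).continuousWithinAt

theorem integral_Ioi_rpow_mul_one_add_rpow_neg_sub_rpow_eq_realBeta (hb : b < 0) (hb' : -1 < b)
    (hab : 0 < a + b) :
    ∫ s in Ioi (0 : ℝ), (s ^ (a - 1) * (1 + s) ^ (-(a + b)) - s ^ (-b - 1)) = realBeta a b := by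
  have ha : 0 < a := by linarith
  have hH := integral_Ioi_rpow_mul_one_add_rpow_neg_eq_realBeta ha (by linarith : 0 < b + 1)
  -- integrable because its integral is nonzero (a non-integrable function has integral `0`)
  have hHint : IntegrableOn (fun s : ℝ => s ^ (a - 1) * (1 + s) ^ (-(a + (b + 1)))) (Ioi 0) :=
    Integrable.of_integral_ne_zero <| by
      rw [hH]; exact (ProbabilityTheory.beta_pos ha (by linarith)).ne'
  have hFint := integrableOn_Ioi_rpow_mul_one_add_rpow_neg_sub_rpow hb hb' hab
  have hFTC := integral_Ioi_of_hasDerivAt_of_tendsto (continuousWithinAt_betaPrimitive_zero hb hab)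
    (fun s hs => hasDerivAt_betaPrimitive hb.ne hs) (hFint.sub (hHint.const_mul _))
    (tendsto_betaPrimitive_atTop hb' hab)
  rw [integral_sub hFint (hHint.const_mul _), integral_const_mul, hH,
    realBeta_add_one_right hb.ne hab.ne', betaPrimitive, zero_rpow (by linarith),
    zero_rpow ha.ne'] at hFTC
  simp only [zero_mul, sub_zero, zero_div] at hFTC
  have hb0 : b ≠ 0 := hb.ne
  have hcancel : (a + b) / b * (b / (a + b) * realBeta a b) = realBeta a b := by
    field_simp
  linarith

theorem integral_Ioi_rpow_mul_one_add_rpow_rpow_neg_sub_rpow_eq_realBeta {p : ℝ} (hp : 0 < p)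
    (hb : b < 0) (hb' : -1 < b) (hab : 0 < a + b) :
    ∫ t in Ioi (0 : ℝ), (t ^ (p * a - 1) * (1 + t ^ p) ^ (-(a + b)) - t ^ (-(p * b) - 1)) =
      p⁻¹ * realBeta a b := by
  rw [← integral_Ioi_rpow_mul_one_add_rpow_neg_sub_rpow_eq_realBeta hb hb' hab]
  conv_rhs => rw [← integral_comp_rpow_Ioi_of_pos hp, ← integral_const_mul]
  refine setIntegral_congr_fun measurableSet_Ioi fun t (ht : 0 < t) => ?_
  have hsplit : ∀ q, t ^ (p * q - 1) = t ^ (p - 1) * (t ^ p) ^ (q - 1) := fun q => by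
    rw [← rpow_mul ht.le, ← rpow_add ht]; ring_nf
  rw [hsplit, show -(p * b) - 1 = p * (-b) - 1 by ring, hsplit, smul_eq_mul]
  field_simp

end

theorem stmt_3_general (m j k : ℕ) (hk : 1 ≤ k) (hkj : k ≤ j)
    (hj : 2 * j < m + 2) (hj1 : j ≠ 1) :
    ∫ t in Ioi (0 : ℝ),
        (t ^ ((m : ℝ) * k - j) / (1 + t ^ m) ^ ((k : ℝ) - 1 / 2) - t ^ ((m : ℝ) / 2 - j)) =
      (1 / m) * realBeta ((k : ℝ) - ((j : ℝ) - 1) / m) (((j : ℝ) - 1) / m - 1 / 2) := by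
  have hm : (0 : ℝ) < m := by exact_mod_cast (by omega : 0 < m)
  have hj2 : (2 : ℝ) ≤ j := by exact_mod_cast (by omega : 2 ≤ j)
  have hk1 : (1 : ℝ) ≤ k := by exact_mod_cast hk
  have hd0 : 0 < ((j : ℝ) - 1) / m := div_pos (by linarith) hm
  have hd : ((j : ℝ) - 1) / m < 1 / 2 := by
    rw [div_lt_iff₀ hm]
    linarith [show 2 * (j : ℝ) < m + 2 by exact_mod_cast hj]
  have key := integral_Ioi_rpow_mul_one_add_rpow_rpow_neg_sub_rpow_eq_realBeta hm
    (a := k - ((j : ℝ) - 1) / m) (b := ((j : ℝ) - 1) / m - 1 / 2)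
    (by linarith) (by linarith) (by linarith)
  rw [show (m : ℝ) * (k - (j - 1) / m) - 1 = m * k - j by field_simp; ring,
    show -((m : ℝ) * ((j - 1) / m - 1 / 2)) - 1 = m / 2 - j by field_simp; ring,
    show -((k : ℝ) - (j - 1) / m + ((j - 1) / m - 1 / 2)) = -(k - 1 / 2) by ring,
    inv_eq_one_div] at key
  rw [← key]
  refine setIntegral_congr_fun measurableSet_Ioi fun t (ht : 0 < t) => ?_
  rw [rpow_natCast, rpow_neg (by positivity), div_eq_mul_inv]

theorem stmt_3 (m j k : ℕ) (hm : 3 ≤ m) (hk : 1 ≤ k) (hkj : k ≤ j)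
    (hj : 2 * j < m + 2) (hj1 : j ≠ 1) :
    ∫ t in Ioi (0 : ℝ),
        (t ^ ((m : ℝ) * k - j) / (1 + t ^ m) ^ ((k : ℝ) - 1 / 2) - t ^ ((m : ℝ) / 2 - j)) =
      (1 / m) * realBeta ((k : ℝ) - ((j : ℝ) - 1) / m) (((j : ℝ) - 1) / m - 1 / 2) :=
  stmt_3_general m j k hk hkj hj hj1
end

section
/- Let m ≥ 3 and j, k integers with 1 ≤ k ≤ j < (m+2)/2 and j ≠ 1. Then the recursion ∫₀^∞ ( t^{mk−j}/(1+t^m)^{k−1/2} − t^{m/2−j} ) dt = ((m(k−1)−(j−1))/(m(k−1)−m/2)) · ∫₀^∞ ( t^{m(k−1)−j}/(1+t^m)^{(k−1)−1/2} − t^{m/2−j} ) dt holds for k ≥ 2. -/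
/-!
Write `f_{b,a}(t) = t^a (1 + t^M)^{-b} - t^{a - M b}`: the subtracted power is the leading term of
`t^a (1 + t^M)^{-b}` at infinity, so `f_{b,a}` is integrable on `(0, ∞)` once
`-1 < a - M b < M - 1`. The function `f_{b,p}` vanishes at `0` and at infinity, and its derivative
is `p f_{b,p-1} - M b f_{b+1,p+M-1}`; integrating it over `(0, ∞)` gives
`p ∫ f_{b,p-1} = M b ∫ f_{b+1,p+M-1}`, which is the recursion for `b = k - 3/2`,
`p = m (k - 1) - j + 1`.
-/

open Real MeasureTheory Set Filter Topology

lemma one_sub_mul_le_one_add_rpow_neg {b u : ℝ} (hb : 0 ≤ b) (hu : -1 < u) :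
    1 - b * u ≤ (1 + u) ^ (-b) := by
  have hu' : 0 < 1 + u := by linarith
  have hlog : log (1 + u) ≤ u := by linarith [log_le_sub_one_of_pos hu']
  calc 1 - b * u ≤ log (1 + u) * -b + 1 := by nlinarith
    _ ≤ exp (log (1 + u) * -b) := add_one_le_exp _
    _ = (1 + u) ^ (-b) := (rpow_def_of_pos hu' _).symm

noncomputable def regularizedIntegrand (M b a t : ℝ) : ℝ :=
  t ^ a * (1 + t ^ M) ^ (-b) - t ^ (a - M * b)

noncomputable def regularizedIntegral (M b a : ℝ) : ℝ :=
  ∫ t in Ioi 0, regularizedIntegrand M b a t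

section

variable {M b a t : ℝ}

lemma abs_regularizedIntegrand_le (hb : 0 ≤ b) (ht : 0 < t) :
    |regularizedIntegrand M b a t| ≤ b * t ^ (a - M * b - M) := by
  have hv : 0 < t ^ (-M) := rpow_pos_of_pos ht _
  have hfactor : t ^ a * (1 + t ^ M) ^ (-b) = t ^ (a - M * b) * (1 + t ^ (-M)) ^ (-b) := by
    have h : 1 + t ^ M = t ^ M * (1 + t ^ (-M)) := by
      rw [mul_add, mul_one, ← rpow_add ht, add_neg_cancel, rpow_zero, add_comm]
    rw [h, mul_rpow (rpow_nonneg ht.le M) (by positivity), ← rpow_mul ht.le, ← mul_assoc,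
      ← rpow_add ht, show a + M * -b = a - M * b by ring]
  have hle_one : (1 + t ^ (-M)) ^ (-b) ≤ 1 :=
    rpow_le_one_of_one_le_of_nonpos (by linarith) (by linarith)
  have hdiff : |(1 + t ^ (-M)) ^ (-b) - 1| ≤ b * t ^ (-M) := by
    rw [abs_sub_comm, abs_of_nonneg (by linarith)]
    linarith [one_sub_mul_le_one_add_rpow_neg hb (by linarith : -1 < t ^ (-M))]
  calc |regularizedIntegrand M b a t|
      = t ^ (a - M * b) * |(1 + t ^ (-M)) ^ (-b) - 1| := by
        rw [regularizedIntegrand, hfactor, ← mul_sub_one, abs_mul,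
          abs_of_nonneg (rpow_nonneg ht.le _)]
    _ ≤ t ^ (a - M * b) * (b * t ^ (-M)) := by gcongr
    _ = b * t ^ (a - M * b - M) := by
        rw [sub_eq_add_neg (a - M * b), rpow_add ht]; ring

lemma continuousOn_regularizedIntegrand :
    ContinuousOn (regularizedIntegrand M b a) (Ioi 0) := by
  intro x (hx : 0 < x)
  have hpow (c : ℝ) : ContinuousAt (fun t : ℝ => t ^ c) x :=
    continuousAt_rpow_const x c (Or.inl hx.ne')
  have hbase : 1 + x ^ M ≠ 0 := by positivity
  exact (((hpow a).mul ((continuousAt_const.add (hpow M)).rpow_const (Or.inl hbase))).sub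
    (hpow _)).continuousWithinAt

lemma integrableOn_regularizedIntegrand (hb : 0 ≤ b) (ha : -1 < a) (h₀ : -1 < a - M * b)
    (hinf : a - M * b - M < -1) :
    IntegrableOn (regularizedIntegrand M b a) (Ioi 0) := by
  rw [← Ioc_union_Ioi_eq_Ioi zero_le_one, integrableOn_union,
    integrableOn_Ioc_iff_integrableOn_Ioo]
  constructor
  · have hdom := ((intervalIntegral.integrableOn_Ioo_rpow_iff one_pos).2 ha).add
      ((intervalIntegral.integrableOn_Ioo_rpow_iff one_pos).2 h₀)
    refine hdom.mono' ?_ ?_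
    · exact (continuousOn_regularizedIntegrand.mono Ioo_subset_Ioi_self)
        |>.aestronglyMeasurable measurableSet_Ioo
    · refine (ae_restrict_iff' measurableSet_Ioo).2 (ae_of_all _ fun x hx => ?_)
      have hx0 : 0 < x := hx.1
      have hle_one : (1 + x ^ M) ^ (-b) ≤ 1 :=
        rpow_le_one_of_one_le_of_nonpos (by linarith [rpow_nonneg hx0.le M]) (by linarith)
      have hpos : 0 ≤ (1 + x ^ M) ^ (-b) := by positivity
      rw [norm_eq_abs, regularizedIntegrand]
      refine (abs_sub _ _).trans (add_le_add ?_ (abs_of_nonneg (rpow_nonneg hx0.le _)).le)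
      rw [abs_mul, abs_of_nonneg (rpow_nonneg hx0.le a), abs_of_nonneg hpos]
      exact mul_le_of_le_one_right (rpow_nonneg hx0.le a) hle_one
  · refine ((integrableOn_Ioi_rpow_of_lt hinf one_pos).const_mul b).mono' ?_ ?_
    · exact (continuousOn_regularizedIntegrand.mono (Ioi_subset_Ioi zero_le_one))
        |>.aestronglyMeasurable measurableSet_Ioi
    · refine (ae_restrict_iff' measurableSet_Ioi).2 (ae_of_all _ fun x (hx : 1 < x) => ?_)
      exact abs_regularizedIntegrand_le hb (by linarith)

lemma hasDerivAt_regularizedIntegrand {p x : ℝ} (hx : 0 < x) :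
    HasDerivAt (regularizedIntegrand M b p)
      (p * regularizedIntegrand M b (p - 1) x
        - M * b * regularizedIntegrand M (b + 1) (p + M - 1) x) x := by
  have hbase : 0 < 1 + x ^ M := by positivity
  have hpow (c : ℝ) : HasDerivAt (fun t : ℝ => t ^ c) (c * x ^ (c - 1)) x :=
    hasDerivAt_rpow_const (Or.inl hx.ne')
  have hfactor : HasDerivAt (fun t : ℝ => (1 + t ^ M) ^ (-b))
      (M * x ^ (M - 1) * -b * (1 + x ^ M) ^ (-b - 1)) x :=
    ((hpow M).const_add 1).rpow_const (Or.inl hbase.ne')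
  refine (((hpow p).mul hfactor).sub (hpow (p - M * b))).congr_deriv ?_
  have hexp : x ^ p * x ^ (M - 1) = x ^ (p + M - 1) := by
    rw [← rpow_add hx, add_sub_assoc]
  simp only [regularizedIntegrand, show -(b + 1) = -b - 1 by ring,
    show p + M - 1 - M * (b + 1) = p - M * b - 1 by ring, sub_right_comm p 1]
  linear_combination -(M * b * (1 + x ^ M) ^ (-b - 1)) * hexp

lemma tendsto_regularizedIntegrand_atTop (hb : 0 ≤ b) (ha : a - M * b < M) :
    Tendsto (regularizedIntegrand M b a) atTop (𝓝 0) := by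
  have hdecay : Tendsto (fun t : ℝ => b * t ^ (a - M * b - M)) atTop (𝓝 0) := by
    simpa using (tendsto_rpow_neg_atTop (y := M - (a - M * b)) (by linarith)).const_mul b
  refine squeeze_zero_norm' ?_ hdecay
  filter_upwards [eventually_gt_atTop 0] with t ht
  exact abs_regularizedIntegrand_le hb ht

lemma continuousAt_regularizedIntegrand_zero (hM : 0 ≤ M) (ha : 0 ≤ a) (hab : 0 ≤ a - M * b) :
    ContinuousAt (regularizedIntegrand M b a) 0 := by
  have hpow {c : ℝ} (hc : 0 ≤ c) : ContinuousAt (fun t : ℝ => t ^ c) 0 :=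
    continuousAt_rpow_const 0 c (Or.inr hc)
  have hbase : 1 + (0 : ℝ) ^ M ≠ 0 := by positivity
  exact ((hpow ha).mul ((continuousAt_const.add (hpow hM)).rpow_const (Or.inl hbase))).sub
    (hpow hab)

lemma regularizedIntegrand_zero (ha : a ≠ 0) (hab : a - M * b ≠ 0) :
    regularizedIntegrand M b a 0 = 0 := by
  simp [regularizedIntegrand, zero_rpow ha, zero_rpow hab]

theorem mul_regularizedIntegral_eq {p : ℝ} (hb : 0 ≤ b) (hq : 0 < p - M * b)
    (hqM : p - M * b < M) :
    p * regularizedIntegral M b (p - 1) = M * b * regularizedIntegral M (b + 1) (p + M - 1) := by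
  have hMb : 0 ≤ M * b := mul_nonneg (by linarith) hb
  have hint₁ : IntegrableOn (regularizedIntegrand M b (p - 1)) (Ioi 0) :=
    integrableOn_regularizedIntegrand hb (by linarith) (by linarith) (by linarith)
  have hint₂ : IntegrableOn (regularizedIntegrand M (b + 1) (p + M - 1)) (Ioi 0) :=
    integrableOn_regularizedIntegrand (by linarith) (by linarith) (by linarith) (by linarith)
  have hFTC := integral_Ioi_of_hasDerivAt_of_tendsto
    (continuousAt_regularizedIntegrand_zero (by linarith) (by linarith) hq.le).continuousWithinAt
    (fun x hx => hasDerivAt_regularizedIntegrand hx) ((hint₁.const_mul p).sub (hint₂.const_mul _))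
    (tendsto_regularizedIntegrand_atTop hb (by linarith))
  rw [integral_sub (hint₁.const_mul p) (hint₂.const_mul _), integral_const_mul,
    integral_const_mul, regularizedIntegrand_zero (by linarith) hq.ne'] at hFTC
  rw [regularizedIntegral, regularizedIntegral]
  linarith

lemma setIntegral_div_sub_eq_regularizedIntegral {c : ℝ} (hc : c = a - M * b) :
    ∫ t in Ioi (0 : ℝ), (t ^ a / (1 + t ^ M) ^ b - t ^ c) = regularizedIntegral M b a := by
  refine setIntegral_congr_fun measurableSet_Ioi fun t (ht : 0 < t) => ?_
  rw [regularizedIntegrand, hc, div_eq_mul_inv, ← rpow_neg (by positivity)]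

end

theorem stmt_4_general (m j k : ℕ) (hm : 3 ≤ m) (hk : 2 ≤ k)
    (hj : 2 * j < m + 2) :
    ∫ t in Ioi (0 : ℝ),
        (t ^ ((m : ℝ) * k - j) / (1 + t ^ m) ^ ((k : ℝ) - 1 / 2) - t ^ ((m : ℝ) / 2 - j)) =
      (((m : ℝ) * ((k : ℝ) - 1) - ((j : ℝ) - 1)) / ((m : ℝ) * ((k : ℝ) - 1) - (m : ℝ) / 2)) *
        ∫ t in Ioi (0 : ℝ),
          (t ^ ((m : ℝ) * ((k : ℝ) - 1) - j) / (1 + t ^ m) ^ (((k : ℝ) - 1) - 1 / 2) -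
            t ^ ((m : ℝ) / 2 - j)) := by
  have hm' : (3 : ℝ) ≤ m := by exact_mod_cast hm
  have hk' : (2 : ℝ) ≤ k := by exact_mod_cast hk
  have hj' : 2 * (j : ℝ) < m + 2 := by exact_mod_cast hj
  have hrec := mul_regularizedIntegral_eq (M := m) (b := k - 1 - 1 / 2)
    (p := m * (k - 1) - (j - 1)) (by linarith) (by linarith) (by linarith)
  simp only [← rpow_natCast]
  rw [setIntegral_div_sub_eq_regularizedIntegral (by ring),
    setIntegral_div_sub_eq_regularizedIntegral (by ring)]
  rw [show (k : ℝ) - 1 - 1 / 2 + 1 = k - 1 / 2 by ring,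
    show (m : ℝ) * (k - 1) - (j - 1) + m - 1 = m * k - j by ring,
    show (m : ℝ) * (k - 1) - (j - 1) - 1 = m * (k - 1) - j by ring] at hrec
  have hMb : (m : ℝ) * (k - 1) - m / 2 ≠ 0 := by nlinarith
  rw [div_mul_eq_mul_div, eq_div_iff hMb, hrec]
  ring

theorem stmt_4 (m j k : ℕ) (hm : 3 ≤ m) (hk : 2 ≤ k) (hkj : k ≤ j)
    (hj : 2 * j < m + 2) (hj1 : j ≠ 1) :
    ∫ t in Ioi (0 : ℝ),
        (t ^ ((m : ℝ) * k - j) / (1 + t ^ m) ^ ((k : ℝ) - 1 / 2) - t ^ ((m : ℝ) / 2 - j)) =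
      (((m : ℝ) * ((k : ℝ) - 1) - ((j : ℝ) - 1)) / ((m : ℝ) * ((k : ℝ) - 1) - (m : ℝ) / 2)) *
        ∫ t in Ioi (0 : ℝ),
          (t ^ ((m : ℝ) * ((k : ℝ) - 1) - j) / (1 + t ^ m) ^ (((k : ℝ) - 1) - 1 / 2) -
            t ^ ((m : ℝ) / 2 - j)) :=
  stmt_4_general m j k hm hk hj
end

section
/- Let m ≥ 4 be an even integer, j = (m+2)/2, and 1 ≤ k ≤ j. Then ∫₀^∞ ( t^{mk−j}/(1+t^m)^{k−1/2} − 1/(1+t) ) dt = (2/m)( ln 2 − 1/1 − 1/3 − ⋯ − 1/(2k−3) ), where the sum 1/1 + 1/3 + ⋯ + 1/(2k−3) is empty when k = 1. -/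
/-!
Write `m = 2n` and substitute `s = S(t) := tⁿ / √(1 + t²ⁿ)`, which increases from `0` to `1`
on `(0, ∞)` with `1 - s² = 1 / (1 + t²ⁿ)` and `ds/dt = n s (1 - s²) / t`. Then the integrand is
`s^(2k-1)/t - 1/(1+t)` and `s^(2k-1) dt / t = s^(2k-2) ds / (n (1 - s²))`, a primitive of which is
`(artanh s - ∑_{i<k-1} s^(2i+1)/(2i+1)) / n`. Since `artanh S(t) = log (1 + S(t)) + log (1 + t²ⁿ) / 2`,
this gives an explicit primitive of the whole integrand. It vanishes at `0` and tends to
`(log 2 - ∑_{i<k-1} 1/(2i+1)) / n` at infinity, because `log (1 + t²ⁿ) / (2n) - log (1 + t) → 0`.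
Integrability comes from the bound `|integrand| ≤ 4k / (1 + t²)`.
-/

open Real MeasureTheory Set Filter Topology

lemma one_add_pow_two_mul_pos (n : ℕ) (t : ℝ) : 0 < 1 + t ^ (2 * n) := by
  have := (even_two_mul n).pow_nonneg t
  linarith

lemma cast_two_mul_sub_one {k : ℕ} (hk : 1 ≤ k) : ((2 * k - 1 : ℕ) : ℝ) = 2 * k - 1 := by
  rw [Nat.cast_sub (by omega)]
  push_cast
  ring

noncomputable def powDivSqrt (n : ℕ) (t : ℝ) : ℝ := t ^ n / √(1 + t ^ (2 * n))

section

variable (n : ℕ)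

lemma sqrt_one_add_pow_two_mul_pos (t : ℝ) : 0 < √(1 + t ^ (2 * n)) :=
  Real.sqrt_pos.2 (one_add_pow_two_mul_pos n t)

lemma sq_sqrt_one_add_pow_two_mul (t : ℝ) : √(1 + t ^ (2 * n)) ^ 2 = 1 + t ^ (2 * n) :=
  Real.sq_sqrt (one_add_pow_two_mul_pos n t).le

lemma powDivSqrt_nonneg {t : ℝ} (ht : 0 ≤ t) : 0 ≤ powDivSqrt n t :=
  div_nonneg (pow_nonneg ht n) (Real.sqrt_nonneg _)

lemma powDivSqrt_le_pow {t : ℝ} (ht : 0 ≤ t) : powDivSqrt n t ≤ t ^ n :=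
  div_le_self (pow_nonneg ht n) (Real.one_le_sqrt.2 (by linarith [(even_two_mul n).pow_nonneg t]))

lemma one_sub_powDivSqrt_sq (t : ℝ) : 1 - powDivSqrt n t ^ 2 = (1 + t ^ (2 * n))⁻¹ := by
  have := one_add_pow_two_mul_pos n t
  rw [powDivSqrt, div_pow, sq_sqrt_one_add_pow_two_mul, ← pow_mul, mul_comm n 2]
  field_simp
  ring

lemma powDivSqrt_lt_one (t : ℝ) : powDivSqrt n t < 1 := by
  have h := one_sub_powDivSqrt_sq n t
  have := inv_pos.2 (one_add_pow_two_mul_pos n t)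
  nlinarith

lemma powDivSqrt_zero (hn : n ≠ 0) : powDivSqrt n 0 = 0 := by
  simp [powDivSqrt, hn]

lemma continuous_powDivSqrt : Continuous (powDivSqrt n) :=
  (continuous_pow n).div (by fun_prop) fun t ↦ (sqrt_one_add_pow_two_mul_pos n t).ne'

lemma hasDerivAt_powDivSqrt {t : ℝ} (ht : t ≠ 0) :
    HasDerivAt (powDivSqrt n) (n * powDivSqrt n t * (1 - powDivSqrt n t ^ 2) / t) t := by
  have hq : HasDerivAt (fun t : ℝ ↦ 1 + t ^ (2 * n)) (↑(2 * n) * t ^ (2 * n - 1)) t :=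
    (hasDerivAt_pow (2 * n) t).const_add 1
  have h := (hasDerivAt_pow n t).div (hq.sqrt (one_add_pow_two_mul_pos n t).ne')
    (sqrt_one_add_pow_two_mul_pos n t).ne'
  refine h.congr_deriv ?_
  rw [one_sub_powDivSqrt_sq]
  have hr := sq_sqrt_one_add_pow_two_mul n t
  have hr0 := (sqrt_one_add_pow_two_mul_pos n t).ne'
  rcases Nat.eq_zero_or_pos n with rfl | hn
  · simp
  have e1 : t ^ (n - 1) = t ^ n / t := by
    rw [eq_div_iff ht, ← pow_succ, Nat.sub_add_cancel hn]
  have e2 : t ^ (2 * n - 1) = t ^ n * t ^ n / t := by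
    rw [eq_div_iff ht, ← pow_succ, Nat.sub_add_cancel (by omega), ← pow_add, two_mul]
  have htn : (t ^ n) ^ 2 = t ^ (2 * n) := by rw [← pow_mul, mul_comm]
  simp only [powDivSqrt, e1, e2]
  generalize √(1 + t ^ (2 * n)) = r at hr hr0 ⊢
  rw [← hr]
  field_simp
  push_cast
  linear_combination (2 * n) * hr - 2 * n * htn

lemma tendsto_powDivSqrt_atTop (hn : n ≠ 0) : Tendsto (powDivSqrt n) atTop (𝓝 1) := by
  have hq : Tendsto (fun t : ℝ ↦ 1 + t ^ (2 * n)) atTop atTop :=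
    tendsto_atTop_add_const_left _ 1 (tendsto_pow_atTop (by omega))
  have hsqrt : Tendsto (fun t : ℝ ↦ √(1 - (1 + t ^ (2 * n))⁻¹)) atTop (𝓝 1) := by
    have h : Tendsto (fun t : ℝ ↦ 1 - (1 + t ^ (2 * n))⁻¹) atTop (𝓝 (1 - 0)) :=
      tendsto_const_nhds.sub hq.inv_tendsto_atTop
    simpa using h.sqrt
  refine hsqrt.congr' ?_
  filter_upwards [eventually_ge_atTop 0] with t ht
  rw [← one_sub_powDivSqrt_sq, sub_sub_cancel, Real.sqrt_sq (powDivSqrt_nonneg n ht)]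

end

lemma tendsto_log_one_add_pow_div_sub_log_one_add {N : ℕ} (hN : N ≠ 0) :
    Tendsto (fun t : ℝ ↦ log (1 + t ^ N) / N - log (1 + t)) atTop (𝓝 0) := by
  set F : ℝ → ℝ := fun u ↦ log (1 + u ^ N) / N - log (1 + u)
  have hF : ContinuousAt F 0 := by
    fun_prop (disch := simp [hN])
  have hF0 : F 0 = 0 := by simp [F, hN]
  -- `F t⁻¹ = F t` for `t > 0`: both logarithms lose the same `N * log t`.
  have h := hF.tendsto.comp tendsto_inv_atTop_zero
  rw [hF0] at h
  refine h.congr' ?_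
  filter_upwards [eventually_gt_atTop 0] with t ht
  have hN0 : (N : ℝ) ≠ 0 := Nat.cast_ne_zero.2 hN
  have e1 : 1 + t⁻¹ ^ N = (1 + t ^ N) / t ^ N := by
    rw [inv_pow]
    field_simp
    ring
  have e2 : 1 + t⁻¹ = (1 + t) / t := by
    field_simp
    ring
  simp only [Function.comp_apply, F, e1, e2]
  rw [log_div (by positivity) (by positivity), log_div (by positivity) ht.ne', log_pow]
  field_simp
  ring

noncomputable def oddPowIntegrand (n k : ℕ) (t : ℝ) : ℝ :=
  powDivSqrt n t ^ (2 * k - 1) / t - 1 / (1 + t)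

noncomputable def oddPowPrimitive (n k : ℕ) (t : ℝ) : ℝ :=
  (log (1 + powDivSqrt n t) -
      ∑ i ∈ Finset.range (k - 1), powDivSqrt n t ^ (2 * i + 1) / (2 * i + 1)) / n +
    (log (1 + t ^ (2 * n)) / (2 * n) - log (1 + t))

section

variable {n k : ℕ}

lemma hasDerivAt_log_one_add_powDivSqrt_sub_sum (hk : 1 ≤ k) {t : ℝ} (ht : 0 < t) :
    HasDerivAt
      (fun u ↦ log (1 + powDivSqrt n u) -
        ∑ i ∈ Finset.range (k - 1), powDivSqrt n u ^ (2 * i + 1) / (2 * i + 1))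
      (n * (powDivSqrt n t ^ (2 * k - 1) - powDivSqrt n t ^ 2) / t) t := by
  set s := powDivSqrt n t
  have hS : HasDerivAt (powDivSqrt n) (n * s * (1 - s ^ 2) / t) t :=
    hasDerivAt_powDivSqrt n ht.ne'
  have hs1 : 0 < 1 + s := by linarith [powDivSqrt_nonneg n ht.le]
  have hlog : HasDerivAt (fun u ↦ log (1 + powDivSqrt n u))
      (n * s * (1 - s ^ 2) / t / (1 + s)) t := by
    simpa using (hS.const_add 1).log hs1.ne'
  have hsum : HasDerivAt
      (fun u ↦ ∑ i ∈ Finset.range (k - 1), powDivSqrt n u ^ (2 * i + 1) / (2 * i + 1))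
      ((∑ i ∈ Finset.range (k - 1), (s ^ 2) ^ i) * (n * s * (1 - s ^ 2) / t)) t := by
    rw [Finset.sum_mul]
    refine HasDerivAt.fun_sum fun i _ ↦ ((hS.pow (2 * i + 1)).div_const _).congr_deriv ?_
    rw [Nat.add_sub_cancel, ← pow_mul]
    field_simp
    push_cast
    ring
  refine (hlog.sub hsum).congr_deriv ?_
  have hgeom := mul_neg_geom_sum (s ^ 2) (k - 1)
  have hpow : s ^ (2 * k - 1) = s * (s ^ 2) ^ (k - 1) := by
    rw [← pow_mul, ← pow_succ']
    congr 1
    omega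
  rw [hpow]
  field_simp
  linear_combination (-(n : ℝ) * s * (1 + s)) * hgeom

lemma hasDerivAt_log_one_add_pow_two_mul {t : ℝ} (ht : t ≠ 0) :
    HasDerivAt (fun u : ℝ ↦ log (1 + u ^ (2 * n))) (2 * n * powDivSqrt n t ^ 2 / t) t := by
  have hq := one_add_pow_two_mul_pos n t
  refine (((hasDerivAt_pow (2 * n) t).const_add 1).log hq.ne').congr_deriv ?_
  have hsq : powDivSqrt n t ^ 2 = 1 - (1 + t ^ (2 * n))⁻¹ := by
    linarith [one_sub_powDivSqrt_sq n t]
  rcases Nat.eq_zero_or_pos n with rfl | hn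
  · simp
  have htpow : t ^ (2 * n - 1) = t ^ (2 * n) / t := by
    rw [eq_div_iff ht, ← pow_succ, Nat.sub_add_cancel (by omega)]
  rw [hsq, htpow]
  push_cast
  field_simp
  ring

lemma hasDerivAt_oddPowPrimitive (hn : n ≠ 0) (hk : 1 ≤ k) {t : ℝ} (ht : 0 < t) :
    HasDerivAt (oddPowPrimitive n k) (oddPowIntegrand n k t) t := by
  have hlog : HasDerivAt (fun u : ℝ ↦ log (1 + u)) (1 / (1 + t)) t := by
    simpa using ((hasDerivAt_id t).const_add 1).log (by linarith : 1 + t ≠ 0)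
  refine (((hasDerivAt_log_one_add_powDivSqrt_sub_sum hk ht).div_const n).add
    (((hasDerivAt_log_one_add_pow_two_mul ht.ne').div_const (2 * n)).sub hlog)).congr_deriv ?_
  have hn0 : (n : ℝ) ≠ 0 := Nat.cast_ne_zero.2 hn
  rw [oddPowIntegrand]
  field_simp
  ring

lemma tendsto_oddPowPrimitive_atTop (hn : n ≠ 0) :
    Tendsto (oddPowPrimitive n k) atTop
      (𝓝 ((log 2 - ∑ i ∈ Finset.range (k - 1), 1 / (2 * (i : ℝ) + 1)) / n)) := by
  have hS := tendsto_powDivSqrt_atTop n hn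
  have hlog : Tendsto (fun t ↦ log (1 + powDivSqrt n t)) atTop (𝓝 (log 2)) := by
    have := (tendsto_const_nhds (x := (1 : ℝ))).add hS
    norm_num at this
    exact this.log (by norm_num)
  have hsum := tendsto_finsetSum (Finset.range (k - 1))
    fun i _ ↦ (hS.pow (2 * i + 1)).div_const (2 * (i : ℝ) + 1)
  have htail := tendsto_log_one_add_pow_div_sub_log_one_add (N := 2 * n) (by omega)
  push_cast at htail
  have := ((hlog.sub hsum).div_const (n : ℝ)).add htail
  simp only [one_pow, add_zero] at this
  exact this

lemma continuousAt_oddPowPrimitive_zero (hn : n ≠ 0) :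
    ContinuousAt (oddPowPrimitive n k) 0 := by
  have hS := continuous_powDivSqrt n
  unfold oddPowPrimitive
  fun_prop (disch := simp [powDivSqrt_zero n hn, hn])

lemma oddPowPrimitive_zero (hn : n ≠ 0) : oddPowPrimitive n k 0 = 0 := by
  simp [oddPowPrimitive, powDivSqrt_zero n hn, hn]

lemma abs_oddPowIntegrand_le_of_le_one (hn : n ≠ 0) (hk : 1 ≤ k) {t : ℝ} (ht : 0 < t)
    (ht1 : t ≤ 1) : |oddPowIntegrand n k t| ≤ 1 := by
  have hs0 := powDivSqrt_nonneg n ht.le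
  have hs1 := (powDivSqrt_lt_one n t).le
  have hst : powDivSqrt n t ^ (2 * k - 1) ≤ t :=
    calc powDivSqrt n t ^ (2 * k - 1) ≤ powDivSqrt n t := pow_le_of_le_one hs0 hs1 (by omega)
      _ ≤ t ^ n := powDivSqrt_le_pow n ht.le
      _ ≤ t := pow_le_of_le_one ht.le ht1 hn
  have ha : powDivSqrt n t ^ (2 * k - 1) / t ≤ 1 := (div_le_one ht).2 hst
  have hb : 1 / (1 + t) ≤ 1 := (div_le_one (by linarith)).2 (by linarith)
  rw [oddPowIntegrand, abs_sub_le_iff]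
  have ha0 : 0 ≤ powDivSqrt n t ^ (2 * k - 1) / t := div_nonneg (pow_nonneg hs0 _) ht.le
  have hb0 : 0 < 1 / (1 + t) := one_div_pos.2 (by linarith)
  constructor <;> linarith

lemma abs_oddPowIntegrand_le_of_one_le (hn : n ≠ 0) (hk : 1 ≤ k) {t : ℝ} (ht1 : 1 ≤ t) :
    |oddPowIntegrand n k t| ≤ 2 * k / t ^ 2 := by
  have ht : 0 < t := by linarith
  set s := powDivSqrt n t
  have hs0 : 0 ≤ s := powDivSqrt_nonneg n ht.le
  have hs1 : s ≤ 1 := (powDivSqrt_lt_one n t).le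
  have hbern : 1 - s ^ (2 * k - 1) ≤ (2 * k - 1 : ℕ) * (1 - s) := by
    have := one_add_mul_le_pow (a := s - 1) (by linarith) (2 * k - 1)
    rw [add_sub_cancel] at this
    linarith
  have hdecay : 1 - s ≤ t⁻¹ :=
    calc 1 - s ≤ 1 - s ^ 2 := by nlinarith
      _ = (1 + t ^ (2 * n))⁻¹ := one_sub_powDivSqrt_sq n t
      _ ≤ t⁻¹ := inv_anti₀ ht (by linarith [le_self_pow₀ ht1 (by omega : 2 * n ≠ 0)])
  have hA : 0 ≤ 1 - s ^ (2 * k - 1) := sub_nonneg.2 (pow_le_one₀ hs0 hs1)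
  have hk1 : (1 : ℝ) ≤ k := by exact_mod_cast hk
  have htinv : 0 < t⁻¹ := inv_pos.2 ht
  have hb : 1 / (1 + t) ≤ t⁻¹ := by
    rw [one_div]
    exact inv_anti₀ ht (by linarith)
  have hb0 : 0 < 1 / (1 + t) := by positivity
  have e : oddPowIntegrand n k t = (1 / (1 + t) - (1 - s ^ (2 * k - 1))) / t := by
    rw [oddPowIntegrand]
    field_simp
    ring
  calc |oddPowIntegrand n k t| = |1 / (1 + t) - (1 - s ^ (2 * k - 1))| / t := by
        rw [e, abs_div, abs_of_pos ht]
    _ ≤ 2 * k * t⁻¹ / t := by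
        gcongr
        rw [abs_sub_le_iff]
        rw [cast_two_mul_sub_one hk] at hbern
        constructor <;> nlinarith
    _ = 2 * k / t ^ 2 := by ring

lemma abs_oddPowIntegrand_le (hn : n ≠ 0) (hk : 1 ≤ k) {t : ℝ} (ht : 0 < t) :
    |oddPowIntegrand n k t| ≤ 4 * k * (1 + t ^ 2)⁻¹ := by
  have hk1 : (1 : ℝ) ≤ k := by exact_mod_cast hk
  rw [← div_eq_mul_inv, le_div_iff₀ (by positivity)]
  rcases le_total t 1 with ht1 | ht1
  · have := abs_oddPowIntegrand_le_of_le_one hn hk ht ht1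
    nlinarith [abs_nonneg (oddPowIntegrand n k t)]
  · have := abs_oddPowIntegrand_le_of_one_le hn hk ht1
    rw [le_div_iff₀ (by positivity)] at this
    nlinarith [abs_nonneg (oddPowIntegrand n k t), one_le_pow₀ (n := 2) ht1]

lemma continuousOn_oddPowIntegrand : ContinuousOn (oddPowIntegrand n k) (Ioi 0) :=
  (((continuous_powDivSqrt n).pow _).continuousOn.div continuousOn_id fun _ ht ↦ ne_of_gt ht).sub
    (continuousOn_const.div (by fun_prop) fun t (ht : 0 < t) ↦ by linarith)

lemma integrableOn_oddPowIntegrand (hn : n ≠ 0) (hk : 1 ≤ k) :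
    IntegrableOn (oddPowIntegrand n k) (Ioi 0) :=
  Integrable.mono' (integrable_inv_one_add_sq.const_mul (4 * k)).integrableOn
    (continuousOn_oddPowIntegrand.aestronglyMeasurable measurableSet_Ioi)
    (ae_restrict_of_forall_mem measurableSet_Ioi fun _ ht ↦ abs_oddPowIntegrand_le hn hk ht)

lemma integral_oddPowIntegrand (hn : n ≠ 0) (hk : 1 ≤ k) :
    ∫ t in Ioi 0, oddPowIntegrand n k t =
      (log 2 - ∑ i ∈ Finset.range (k - 1), 1 / (2 * (i : ℝ) + 1)) / n := by
  rw [integral_Ioi_of_hasDerivAt_of_tendsto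
      (continuousAt_oddPowPrimitive_zero hn).continuousWithinAt
      (fun _ ht ↦ hasDerivAt_oddPowPrimitive hn hk ht) (integrableOn_oddPowIntegrand hn hk)
      (tendsto_oddPowPrimitive_atTop hn),
    oddPowPrimitive_zero hn, sub_zero]

end

lemma rpow_div_one_add_pow_rpow_eq (n : ℕ) {k : ℕ} (hk : 1 ≤ k) {t : ℝ} (ht : 0 < t) :
    t ^ (((2 * n : ℕ) : ℝ) * k - ((n + 1 : ℕ) : ℝ)) /
        (1 + t ^ (2 * n)) ^ ((k : ℝ) - 1 / 2) =
      powDivSqrt n t ^ (2 * k - 1) / t := by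
  have hnum :
      ((2 * n : ℕ) : ℝ) * k - ((n + 1 : ℕ) : ℝ) = ((n * (2 * k - 1) : ℕ) : ℝ) - 1 := by
    push_cast [cast_two_mul_sub_one hk]
    ring
  have hden : (1 + t ^ (2 * n)) ^ ((k : ℝ) - 1 / 2) = √(1 + t ^ (2 * n)) ^ (2 * k - 1) := by
    rw [← rpow_natCast √(1 + t ^ (2 * n)), sqrt_eq_rpow,
      ← rpow_mul (one_add_pow_two_mul_pos n t).le, cast_two_mul_sub_one hk]
    ring_nf
  rw [hnum, rpow_sub_one ht.ne', rpow_natCast, hden, powDivSqrt, div_pow, ← pow_mul,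
    div_right_comm]

theorem stmt_8_general (m j k : ℕ) (hm : 4 ≤ m) (hj : 2 * j = m + 2)
    (hk : 1 ≤ k) :
    ∫ t in Ioi (0 : ℝ),
        (t ^ ((m : ℝ) * k - j) / (1 + t ^ m) ^ ((k : ℝ) - 1 / 2) - 1 / (1 + t)) =
      (2 / m) * (Real.log 2 - ∑ i ∈ Finset.range (k - 1), 1 / (2 * (i : ℝ) + 1)) := by
  obtain ⟨n, rfl, rfl⟩ : ∃ n, m = 2 * n ∧ j = n + 1 := ⟨j - 1, by omega, by omega⟩
  have hn : n ≠ 0 := by omega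
  rw [setIntegral_congr_fun (g := oddPowIntegrand n k) measurableSet_Ioi fun t ht ↦ by
      rw [oddPowIntegrand, rpow_div_one_add_pow_rpow_eq n hk ht], integral_oddPowIntegrand hn hk]
  push_cast
  field_simp

theorem stmt_8 (m j k : ℕ) (hm : 4 ≤ m) (hme : Even m) (hj : 2 * j = m + 2)
    (hk : 1 ≤ k) (hkj : k ≤ j) :
    ∫ t in Ioi (0 : ℝ),
        (t ^ ((m : ℝ) * k - j) / (1 + t ^ m) ^ ((k : ℝ) - 1 / 2) - 1 / (1 + t)) =
      (2 / m) * (Real.log 2 - ∑ i ∈ Finset.range (k - 1), 1 / (2 * (i : ℝ) + 1)) :=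
  stmt_8_general m j k hm hj hk
end
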